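/- arXiv:1005.2094 — 2 statements merged into one kernel-verified Lean document; each statement's English description precedes it below -/
import Mathlib

section
/- Write Ψ^r_w = ∂Φ_w/∂z^r for the coefficients of the formal functions Ψ^r = ∂Φ/∂z^r. For every graph G in the domain of the budding map (i.e. G ∈ A_2(k−l) with 0 ≤ l ≤ k−1, or G ∈ A^{>1}_2(k+1) with l = −1) and all indices r, s ∈ {1, …, m}, the partition functions satisfy Γ_{B(G)}(Ψ^r_{−1}, z^s) = −Γ_G(Ψ^r_l, z^s). -/
open Finset

/-! ### Functions on `ℂ^m` and Wirtinger derivatives -/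

/-- Points of `ℂ^m`. -/
abbrev Cm (m : ℕ) := Fin m → ℂ

/-- Complex-valued functions on `ℂ^m`. -/
abbrev Fn (m : ℕ) := Cm m → ℂ

/-- The Wirtinger derivative `∂/∂z^p`. -/
noncomputable def dz {m : ℕ} (p : Fin m) (f : Fn m) : Fn m := fun x =>
  (2 : ℂ)⁻¹ * (fderiv ℝ f x (Pi.single p 1) - Complex.I * fderiv ℝ f x (Pi.single p Complex.I))

/-- The Wirtinger derivative `∂/∂z̄^p`. -/
noncomputable def dzbar {m : ℕ} (p : Fin m) (f : Fn m) : Fn m := fun x =>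
  (2 : ℂ)⁻¹ * (fderiv ℝ f x (Pi.single p 1) + Complex.I * fderiv ℝ f x (Pi.single p Complex.I))

/-- Iterated holomorphic derivatives `∂^{|L|} f / ∂z^{L}`. -/
noncomputable def dzList {m : ℕ} (L : List (Fin m)) (f : Fn m) : Fn m := L.foldr dz f

/-- Iterated antiholomorphic derivatives `∂^{|L|} f / ∂z̄^{L}`. -/
noncomputable def dzbarList {m : ℕ} (L : List (Fin m)) (f : Fn m) : Fn m := L.foldr dzbar f

/-- The matrix `g_{p q̄} = ∂² Φ_{-1} / ∂z^p ∂z̄^q` of the (formal) Kähler metric determined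
by a formal potential `Φ` (given by its coefficients `Φ w`, `w ≥ -1`). -/
noncomputable def gMat {m : ℕ} (Φ : ℤ → Fn m) (x : Cm m) : Matrix (Fin m) (Fin m) ℂ :=
  Matrix.of fun p q => dzbar q (dz p (Φ (-1))) x

/-- The entries `g^{q̄ p}` of the pointwise inverse of the metric matrix. -/
noncomputable def gInv {m : ℕ} (Φ : ℤ → Fn m) (q p : Fin m) : Fn m := fun x => (gMat Φ x)⁻¹ q p

/-- A formal potential is admissible on `U` when all its coefficients are smooth on `U`
and the metric matrix is invertible at every point of `U`. -/
def PotentialOK {m : ℕ} (Φ : ℤ → Fn m) (U : Set (Cm m)) : Prop :=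
  (∀ w : ℤ, -1 ≤ w → ContDiffOn ℝ (⊤ : ℕ∞) (Φ w) U) ∧ ∀ x ∈ U, IsUnit (gMat Φ x)

/-! ### Weighted acyclic graphs with `n` external vertices -/

/-- A weighted acyclic graph with `n` (numbered, distinct) external vertices:
finitely many vertices and directed edges (parallel edges allowed, no directed cycles),
every internal vertex (i.e. vertex not in the range of `ext`) has weight `≥ -1`, weight `-1`
internal vertices have degree at least 3, every internal vertex has at least one incoming and
one outgoing edge, the first external vertex is a source and the last one is a sink.
External vertices carry the (irrelevant) weight `0` by convention. -/
structure WGraph (n : ℕ) where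
  nV : ℕ
  nE : ℕ
  head : Fin nE → Fin nV
  tail : Fin nE → Fin nV
  ext : Fin n ↪ Fin nV
  wt : Fin nV → ℤ
  acyclic : ∀ v, ¬ Relation.TransGen (fun a b => ∃ e, tail e = a ∧ head e = b) v v
  wt_ext : ∀ i, wt (ext i) = 0
  wt_ge : ∀ v, (∀ i, ext i ≠ v) → -1 ≤ wt v
  internal_in : ∀ v, (∀ i, ext i ≠ v) → ∃ e, head e = v
  internal_out : ∀ v, (∀ i, ext i ≠ v) → ∃ e, tail e = v
  wt_neg_deg : ∀ v, (∀ i, ext i ≠ v) → wt v = -1 →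
    3 ≤ (univ.filter fun e => head e = v).card + (univ.filter fun e => tail e = v).card
  first_source : ∀ (e) (i : Fin n), head e = ext i → (i : ℕ) ≠ 0
  last_sink : ∀ (e) (i : Fin n), tail e = ext i → (i : ℕ) ≠ n - 1

namespace WGraph

variable {n : ℕ}

/-- A vertex is internal when it is not one of the external vertices. -/
def Internal (G : WGraph n) (v : Fin G.nV) : Prop := ∀ i, G.ext i ≠ v

/-- `G.edgeRel a b` holds when there is an edge from `a` to `b`. -/
def edgeRel (G : WGraph n) (a b : Fin G.nV) : Prop := ∃ e, G.tail e = a ∧ G.head e = b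

/-- Reachability along directed paths (reflexive-transitive closure of `edgeRel`);
`G.Reach a b` with `a ≠ b` says that `b` is a successor of `a`. -/
def Reach (G : WGraph n) : Fin G.nV → Fin G.nV → Prop := Relation.ReflTransGen G.edgeRel

/-- Number of incoming edges of a vertex. -/
def inDeg (G : WGraph n) (v : Fin G.nV) : ℕ := (univ.filter fun e => G.head e = v).card

/-- Number of outgoing edges of a vertex. -/
def outDeg (G : WGraph n) (v : Fin G.nV) : ℕ := (univ.filter fun e => G.tail e = v).card

/-- Total weight `W(G) = |E_G| + Σ_{v internal} w(v)` (external vertices have weight 0). -/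
def W (G : WGraph n) : ℤ := (G.nE : ℤ) + ∑ v, G.wt v

/-- Isomorphism of weighted graphs with numbered external vertices: bijections of
vertices and edges preserving heads, tails, the numbered external vertices, and weights. -/
def Iso (G G' : WGraph n) : Prop :=
  ∃ (σ : Fin G.nV ≃ Fin G'.nV) (τ : Fin G.nE ≃ Fin G'.nE),
    (∀ e, G'.head (τ e) = σ (G.head e)) ∧ (∀ e, G'.tail (τ e) = σ (G.tail e)) ∧
    (∀ i, G'.ext i = σ (G.ext i)) ∧ (∀ v, G'.wt (σ v) = G.wt v)

/-- The order `|Aut(G)|` of the automorphism group of `G`. -/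
noncomputable def autCard (G : WGraph n) : ℕ :=
  Nat.card {p : (Fin G.nV ≃ Fin G.nV) × (Fin G.nE ≃ Fin G.nE) //
    (∀ e, G.head (p.2 e) = p.1 (G.head e)) ∧ (∀ e, G.tail (p.2 e) = p.1 (G.tail e)) ∧
    (∀ i, G.ext i = p.1 (G.ext i)) ∧ (∀ v, G.wt (p.1 v) = G.wt v)}

/-- The number of (concretely presented) graphs isomorphic to `G`. -/
noncomputable def classCard (G : WGraph n) : ℕ := Nat.card {G' : WGraph n // G.Iso G'}

end WGraph

/-! ### Labellings and partition functions -/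

/-- A labelling of a graph assigns to each edge `e` a pair of indices in `{1, …, m}`:
`(l e).1` is the label of `e` at its tail (used as an antiholomorphic index there) and
`(l e).2` is the label of `e` at its head (used as a holomorphic index there).  This is
exactly the data of an index `l(v,e)` for every incident pair of a vertex and an edge. -/
abbrev Labelling (m : ℕ) {n : ℕ} (G : WGraph n) := Fin G.nE → Fin m × Fin m

/-- The labels assigned at `v` to the incoming edges of `v` (in the canonical edge order). -/
def inLabels {m n : ℕ} (G : WGraph n) (l : Labelling m G) (v : Fin G.nV) : List (Fin m) :=
  ((List.finRange G.nE).filter fun e => G.head e = v).map fun e => (l e).2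

/-- The labels assigned at `v` to the outgoing edges of `v` (in the canonical edge order). -/
def outLabels {m n : ℕ} (G : WGraph n) (l : Labelling m G) (v : Fin G.nV) : List (Fin m) :=
  ((List.finRange G.nE).filter fun e => G.tail e = v).map fun e => (l e).1

/-- The factor `F(v)` associated to a vertex: the mixed partial derivative
`∂^{p+q} f_k/∂z^{i_1}⋯∂z^{i_p}∂z̄^{j_1}⋯∂z̄^{j_q}` of `f_k` if `v` is the `k`-th external
vertex, and `-∂^{p+q} Φ_w/∂z^{i_1}⋯∂z^{i_p}∂z̄^{j_1}⋯∂z̄^{j_q}` if `v` is internal of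
weight `w`, where the holomorphic indices are the labels of the incoming edges at `v` and the
antiholomorphic indices are the labels of the outgoing edges at `v`. -/
noncomputable def vertexFn {m n : ℕ} (Φ : ℤ → Fn m) (G : WGraph n) (l : Labelling m G)
    (f : Fin n → Fn m) (v : Fin G.nV) : Fn m :=
  if h : ∃ i, G.ext i = v then
    dzList (inLabels G l v) (dzbarList (outLabels G l v) (f h.choose))
  else
    fun x => -(dzList (inLabels G l v) (dzbarList (outLabels G l v) (Φ (G.wt v))) x)

/-- The partition function `Λ^l_G(f_1, …, f_n)` of a labelled graph: the product over all
vertices of the vertex factors and over all edges `e` (from `u` to `v`, with `s = l(u,e)`,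
`r = l(v,e)`) of the factors `g^{s̄ r}`. -/
noncomputable def Lam {m n : ℕ} (Φ : ℤ → Fn m) (G : WGraph n) (l : Labelling m G)
    (f : Fin n → Fn m) : Fn m :=
  fun x => (∏ v, vertexFn Φ G l f v x) * ∏ e, gInv Φ (l e).1 (l e).2 x

/-- The partition function `Γ_G(f_1, …, f_n)`: the contraction, along the edges of `G` and
using the inverse metric `g^{q̄p}`, of the tensors of partial derivatives attached to the
vertices; equivalently the sum over all labellings of `Λ^l_G(f_1, …, f_n)`. -/
noncomputable def Gam {m n : ℕ} (Φ : ℤ → Fn m) (G : WGraph n) (f : Fin n → Fn m) : Fn m :=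
  fun x => ∑ l : Labelling m G, Lam Φ G l f x

/-- The operator `D_k(f_1, …, f_n) = Σ_{G ∈ 𝒜_n(k)} Γ_G(f_1, …, f_n)/|Aut(G)|`, the sum
being over isomorphism classes of weighted acyclic graphs of total weight `k`; concretely
each isomorphism class is summed via all its concrete representatives, each weighted by
the reciprocal of the number of such representatives. -/
noncomputable def Dk (m : ℕ) (Φ : ℤ → Fn m) (n k : ℕ) (f : Fin n → Fn m) : Fn m := fun x =>
  ∑ᶠ G : WGraph n, if G.W = (k : ℤ) then
    Gam Φ G f x / ((G.classCard : ℂ) * (G.autCard : ℂ)) else 0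

/-- The coefficient of `h^k` in the `ℂ[[h]]`-bilinear extension of the star product
`f₁ ⋆ f₂ = Σ_k D_k(f₁,f₂) h^k` to formal power series `Σ f_i h^i`, `Σ g_j h^j` of functions
(a formal power series is encoded by its coefficient sequence `ℕ → Fn m`). -/
noncomputable def starCoeff {m : ℕ} (Φ : ℤ → Fn m) (f g : ℕ → Fn m) (k : ℕ) : Fn m := fun x =>
  ∑ p ∈ Finset.range (k + 1), ∑ q ∈ Finset.range (k + 1 - p),
    Dk m Φ 2 (k - p - q) ![f p, g q] x
/-! ### The budding construction -/

/-- `Budded l G G'` says that `G'` is obtained from `G` (a weighted acyclic graph with two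
external vertices) by the budding construction: the first external vertex of `G` is
converted into an internal vertex of weight `l`, and a new first external vertex is added,
connected to it by a single edge. -/
def Budded (l : ℤ) (G G' : WGraph 2) : Prop :=
  ∃ (σ : Fin G'.nV ≃ Fin G.nV ⊕ Unit) (τ : Fin G'.nE ≃ Fin G.nE ⊕ Unit),
    (∀ e, G'.head (τ.symm (.inl e)) = σ.symm (.inl (G.head e))) ∧
    (∀ e, G'.tail (τ.symm (.inl e)) = σ.symm (.inl (G.tail e))) ∧
    G'.tail (τ.symm (.inr ())) = σ.symm (.inr ()) ∧
    G'.head (τ.symm (.inr ())) = σ.symm (.inl (G.ext 0)) ∧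
    G'.ext 0 = σ.symm (.inr ()) ∧
    G'.ext 1 = σ.symm (.inl (G.ext 1)) ∧
    (∀ v, v ≠ G.ext 0 → G'.wt (σ.symm (.inl v)) = G.wt v) ∧
    G'.wt (σ.symm (.inl (G.ext 0))) = l

/-- The domain of the budding map `B : 𝒜₂^{>1}(k+1) ∪ ⋃_{l=0}^{k-1} 𝒜₂(k-l) → 𝒜₂^1(k+1)`:
`BudDom k l G` says that either `l = -1` and `G ∈ 𝒜₂^{>1}(k+1)` (total weight `k+1` and the
first external vertex has degree greater than one), or `0 ≤ l ≤ k-1` and `G ∈ 𝒜₂(k-l)`. -/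
def BudDom (k : ℕ) (l : ℤ) (G : WGraph 2) : Prop :=
  (l = -1 ∧ G.W = (k : ℤ) + 1 ∧ 1 < G.outDeg (G.ext 0)) ∨
  (0 ≤ l ∧ l ≤ (k : ℤ) - 1 ∧ G.W = (k : ℤ) - l)



section Aux

/-- directional derivative -/
noncomputable def Dd {m : ℕ} (v : Cm m) (f : Fn m) : Fn m := fun x => fderiv ℝ f x v

noncomputable def lin2 {m : ℕ} (a b : ℂ) (u v : Cm m) (f : Fn m) : Fn m :=
  fun x => a * Dd u f x + b * Dd v f x

lemma dz_eq {m : ℕ} (p : Fin m) (f : Fn m) :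
    dz p f = lin2 (2:ℂ)⁻¹ (-((2:ℂ)⁻¹ * Complex.I)) (Pi.single p 1) (Pi.single p Complex.I) f := by
  funext x; simp only [dz, lin2, Dd]; ring

lemma dzbar_eq {m : ℕ} (p : Fin m) (f : Fn m) :
    dzbar p f = lin2 (2:ℂ)⁻¹ ((2:ℂ)⁻¹ * Complex.I) (Pi.single p 1) (Pi.single p Complex.I) f := by
  funext x; simp only [dzbar, lin2, Dd]; ring

variable {m : ℕ} {U : Set (Cm m)} {f g : Fn m}

lemma contDiffOn_Dd (hU : IsOpen U) (hf : ContDiffOn ℝ (⊤ : ℕ∞) f U) (v : Cm m) :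
    ContDiffOn ℝ (⊤ : ℕ∞) (Dd v f) U :=
  (hf.fderiv_of_isOpen hU (by simp)).clm_apply contDiffOn_const

lemma contDiffOn_lin2 (hU : IsOpen U) (hf : ContDiffOn ℝ (⊤ : ℕ∞) f U) (a b : ℂ) (u v : Cm m) :
    ContDiffOn ℝ (⊤ : ℕ∞) (lin2 a b u v f) U :=
  (contDiffOn_const.mul (contDiffOn_Dd hU hf u)).add
    (contDiffOn_const.mul (contDiffOn_Dd hU hf v))

lemma eqOn_Dd (hU : IsOpen U) (h : Set.EqOn f g U) (v : Cm m) :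
    Set.EqOn (Dd v f) (Dd v g) U := by
  intro x hx
  have : fderiv ℝ f x = fderiv ℝ g x :=
    Filter.EventuallyEq.fderiv_eq (h.eventuallyEq_of_mem (hU.mem_nhds hx))
  simp [Dd, this]

lemma eqOn_lin2 (hU : IsOpen U) (h : Set.EqOn f g U) (a b : ℂ) (u v : Cm m) :
    Set.EqOn (lin2 a b u v f) (lin2 a b u v g) U := by
  intro x hx
  simp only [lin2, eqOn_Dd hU h u hx, eqOn_Dd hU h v hx]

lemma Dd_comm (hU : IsOpen U) (hf : ContDiffOn ℝ (⊤ : ℕ∞) f U) (u v : Cm m) {x : Cm m} (hx : x ∈ U) :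
    Dd u (Dd v f) x = Dd v (Dd u f) x := by
  have hxU : U ∈ nhds x := hU.mem_nhds hx
  have hAt : ContDiffAt ℝ (⊤ : ℕ∞) f x := hf.contDiffAt hxU
  have hsym : IsSymmSndFDerivAt ℝ f x := hAt.isSymmSndFDerivAt (by rw [minSmoothness_of_isRCLikeNormedField]; exact WithTop.coe_le_coe.2 le_top)
  have hdf : DifferentiableAt ℝ (fderiv ℝ f) x :=
    (((hf.fderiv_of_isOpen hU (WithTop.coe_le_coe.2 le_top)).differentiableOn one_ne_zero) x hx).differentiableAt hxU
  have key : ∀ w z : Cm m, Dd w (Dd z f) x = fderiv ℝ (fderiv ℝ f) x w z := by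
    intro w z
    have : fderiv ℝ (fun y => (fderiv ℝ f y) z) x
        = (fderiv ℝ f x).comp (fderiv ℝ (fun _ : Cm m => z) x)
          + (fderiv ℝ (fderiv ℝ f) x).flip z :=
      fderiv_clm_apply hdf (differentiableAt_const z)
    show fderiv ℝ (fun y => (fderiv ℝ f y) z) x w = _
    rw [this]
    simp
  rw [key u v, key v u, hsym v u]

lemma Dd_lin2 (hU : IsOpen U) (hf : ContDiffOn ℝ (⊤ : ℕ∞) f U) (a b : ℂ) (u v w : Cm m)
    {x : Cm m} (hx : x ∈ U) :
    Dd w (lin2 a b u v f) x = a * Dd w (Dd u f) x + b * Dd w (Dd v f) x := by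
  have hxU : U ∈ nhds x := hU.mem_nhds hx
  have hA : DifferentiableAt ℝ (Dd u f) x :=
    (((contDiffOn_Dd hU hf u).differentiableOn (by simp)) x hx).differentiableAt hxU
  have hB : DifferentiableAt ℝ (Dd v f) x :=
    (((contDiffOn_Dd hU hf v).differentiableOn (by simp)) x hx).differentiableAt hxU
  have h := ((hA.hasFDerivAt.const_mul a).add (hB.hasFDerivAt.const_mul b)).fderiv
  show fderiv ℝ (fun y => a * Dd u f y + b * Dd v f y) x w = _
  rw [show (fun y => a * Dd u f y + b * Dd v f y)
      = ((fun y => a * Dd u f y) + fun y => b * Dd v f y) from rfl, h]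
  simp [Dd, smul_eq_mul]

lemma lin2_comm (hU : IsOpen U) (hf : ContDiffOn ℝ (⊤ : ℕ∞) f U) (a b c d : ℂ) (u v u' v' : Cm m)
    {x : Cm m} (hx : x ∈ U) :
    lin2 a b u v (lin2 c d u' v' f) x = lin2 c d u' v' (lin2 a b u v f) x := by
  have e1 : lin2 a b u v (lin2 c d u' v' f) x
      = a * (c * Dd u (Dd u' f) x + d * Dd u (Dd v' f) x)
        + b * (c * Dd v (Dd u' f) x + d * Dd v (Dd v' f) x) := by
    simp only [lin2]
    rw [Dd_lin2 hU hf c d u' v' u hx, Dd_lin2 hU hf c d u' v' v hx]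
  have e2 : lin2 c d u' v' (lin2 a b u v f) x
      = c * (a * Dd u' (Dd u f) x + b * Dd u' (Dd v f) x)
        + d * (a * Dd v' (Dd u f) x + b * Dd v' (Dd v f) x) := by
    simp only [lin2]
    rw [Dd_lin2 hU hf a b u v u' hx, Dd_lin2 hU hf a b u v v' hx]
  rw [e1, e2, Dd_comm hU hf u u' hx, Dd_comm hU hf u v' hx,
    Dd_comm hU hf v u' hx, Dd_comm hU hf v v' hx]
  ring

lemma contDiffOn_dz (hU : IsOpen U) (hf : ContDiffOn ℝ (⊤ : ℕ∞) f U) (p : Fin m) :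
    ContDiffOn ℝ (⊤ : ℕ∞) (dz p f) U := by
  rw [dz_eq]; exact contDiffOn_lin2 hU hf _ _ _ _

lemma contDiffOn_dzbar (hU : IsOpen U) (hf : ContDiffOn ℝ (⊤ : ℕ∞) f U) (p : Fin m) :
    ContDiffOn ℝ (⊤ : ℕ∞) (dzbar p f) U := by
  rw [dzbar_eq]; exact contDiffOn_lin2 hU hf _ _ _ _

lemma eqOn_dz (hU : IsOpen U) (h : Set.EqOn f g U) (p : Fin m) :
    Set.EqOn (dz p f) (dz p g) U := by
  rw [dz_eq, dz_eq]; exact eqOn_lin2 hU h _ _ _ _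

lemma eqOn_dzbar (hU : IsOpen U) (h : Set.EqOn f g U) (p : Fin m) :
    Set.EqOn (dzbar p f) (dzbar p g) U := by
  rw [dzbar_eq, dzbar_eq]; exact eqOn_lin2 hU h _ _ _ _

lemma dz_dzbar_comm (hU : IsOpen U) (hf : ContDiffOn ℝ (⊤ : ℕ∞) f U) (p q : Fin m)
    {x : Cm m} (hx : x ∈ U) : dz p (dzbar q f) x = dzbar q (dz p f) x := by
  rw [dz_eq, dzbar_eq, dz_eq, dzbar_eq]
  exact lin2_comm hU hf _ _ _ _ _ _ _ _ hx

lemma dz_dz_comm (hU : IsOpen U) (hf : ContDiffOn ℝ (⊤ : ℕ∞) f U) (p q : Fin m)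
    {x : Cm m} (hx : x ∈ U) : dz p (dz q f) x = dz q (dz p f) x := by
  rw [dz_eq, dz_eq, dz_eq, dz_eq]
  exact lin2_comm hU hf _ _ _ _ _ _ _ _ hx

lemma dzbar_dzbar_comm (hU : IsOpen U) (hf : ContDiffOn ℝ (⊤ : ℕ∞) f U) (p q : Fin m)
    {x : Cm m} (hx : x ∈ U) : dzbar p (dzbar q f) x = dzbar q (dzbar p f) x := by
  rw [dzbar_eq, dzbar_eq, dzbar_eq, dzbar_eq]
  exact lin2_comm hU hf _ _ _ _ _ _ _ _ hx

@[simp] lemma dzList_nil (f : Fn m) : dzList [] f = f := rfl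
@[simp] lemma dzList_cons (p : Fin m) (L : List (Fin m)) (f : Fn m) :
    dzList (p :: L) f = dz p (dzList L f) := rfl
@[simp] lemma dzbarList_nil (f : Fn m) : dzbarList [] f = f := rfl
@[simp] lemma dzbarList_cons (p : Fin m) (L : List (Fin m)) (f : Fn m) :
    dzbarList (p :: L) f = dzbar p (dzbarList L f) := rfl

lemma contDiffOn_dzList (hU : IsOpen U) (hf : ContDiffOn ℝ (⊤ : ℕ∞) f U) (L : List (Fin m)) :
    ContDiffOn ℝ (⊤ : ℕ∞) (dzList L f) U := by
  induction L with
  | nil => exact hf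
  | cons p L ih => exact contDiffOn_dz hU ih p

lemma contDiffOn_dzbarList (hU : IsOpen U) (hf : ContDiffOn ℝ (⊤ : ℕ∞) f U) (L : List (Fin m)) :
    ContDiffOn ℝ (⊤ : ℕ∞) (dzbarList L f) U := by
  induction L with
  | nil => exact hf
  | cons p L ih => exact contDiffOn_dzbar hU ih p

lemma eqOn_dzList (hU : IsOpen U) (h : Set.EqOn f g U) (L : List (Fin m)) :
    Set.EqOn (dzList L f) (dzList L g) U := by
  induction L with
  | nil => exact h
  | cons p L ih => exact eqOn_dz hU ih p

lemma dzList_perm (hU : IsOpen U) (hf : ContDiffOn ℝ (⊤ : ℕ∞) f U) {L L' : List (Fin m)}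
    (hP : L.Perm L') : Set.EqOn (dzList L f) (dzList L' f) U := by
  induction hP with
  | nil => exact fun x _ => rfl
  | cons p _ ih => exact eqOn_dz hU ih p
  | swap p q L =>
      intro x hx
      simp only [dzList_cons]
      exact dz_dz_comm hU (contDiffOn_dzList hU hf L) q p hx
  | trans _ _ ih1 ih2 => exact fun x hx => (ih1 hx).trans (ih2 hx)

lemma dzbarList_perm (hU : IsOpen U) (hf : ContDiffOn ℝ (⊤ : ℕ∞) f U) {L L' : List (Fin m)}
    (hP : L.Perm L') : Set.EqOn (dzbarList L f) (dzbarList L' f) U := by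
  induction hP with
  | nil => exact fun x _ => rfl
  | cons p _ ih => exact eqOn_dzbar hU ih p
  | swap p q L =>
      intro x hx
      simp only [dzbarList_cons]
      exact dzbar_dzbar_comm hU (contDiffOn_dzbarList hU hf L) q p hx
  | trans _ _ ih1 ih2 => exact fun x hx => (ih1 hx).trans (ih2 hx)

lemma dz_dzbarList (hU : IsOpen U) (hf : ContDiffOn ℝ (⊤ : ℕ∞) f U) (r : Fin m) (L : List (Fin m)) :
    Set.EqOn (dz r (dzbarList L f)) (dzbarList L (dz r f)) U := by
  induction L with
  | nil => exact fun x _ => rfl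
  | cons q L ih =>
      intro x hx
      simp only [dzbarList_cons]
      rw [dz_dzbar_comm hU (contDiffOn_dzbarList hU hf L) r q hx]
      exact eqOn_dzbar hU ih q hx

section ListHelpers
variable {α β : Type*}

lemma perm_of_nodup_mem_iff [DecidableEq α] {l₁ l₂ : List α} (h₁ : l₁.Nodup) (h₂ : l₂.Nodup)
    (h : ∀ a, a ∈ l₁ ↔ a ∈ l₂) : l₁.Perm l₂ := by
  rw [List.perm_iff_count]
  intro a
  by_cases ha : a ∈ l₁
  · rw [List.count_eq_one_of_mem h₁ ha, List.count_eq_one_of_mem h₂ ((h a).1 ha)]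
  · rw [List.count_eq_zero_of_not_mem ha,
      List.count_eq_zero_of_not_mem (fun c => ha ((h a).2 c))]

lemma filter_eq_nil_of {l : List α} {p : α → Prop} [DecidablePred p]
    (h : ∀ a ∈ l, ¬ p a) : l.filter (fun a => p a) = [] := by
  rw [List.filter_eq_nil_iff]
  intro a ha
  simpa using h a ha

lemma filter_eq_singleton [DecidableEq α] {l : List α} (hl : l.Nodup) {a : α} (ha : a ∈ l)
    {p : α → Prop} [DecidablePred p] (hp : ∀ b ∈ l, p b ↔ b = a) :
    l.filter (fun b => p b) = [a] := by
  induction l with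
  | nil => simp at ha
  | cons x xs ih =>
      have hnd := hl
      rw [List.nodup_cons] at hnd
      by_cases hpx : p x
      · have hxa : x = a := (hp x (by simp)).1 hpx
        have : xs.filter (fun b => p b) = [] := by
          apply filter_eq_nil_of
          intro b hb hpb
          have : b = a := (hp b (by simp [hb])).1 hpb
          exact hnd.1 (by rwa [hxa, ← this])
        subst hxa
        simp [List.filter_cons, hpx, this]
      · have hax : a ≠ x := fun h => hpx ((hp x (by simp)).2 h.symm)
        have ha' : a ∈ xs := by
          rcases List.mem_cons.1 ha with h | h
          · exact absurd h hax
          · exact h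
        have := ih hnd.2 ha' (fun b hb => hp b (by simp [hb]))
        simp [List.filter_cons, hpx, this]

lemma perm_filter_map [DecidableEq α] [DecidableEq β] {l₁ : List α} {l₂ : List β}
    (h₁ : l₁.Nodup) (h₂ : l₂.Nodup) {φ : α → β} (hφ : Function.Injective φ)
    {p : α → Prop} {q : β → Prop} [DecidablePred p] [DecidablePred q]
    (hmem : ∀ b, (b ∈ l₂ ∧ q b) ↔ ∃ a, (a ∈ l₁ ∧ p a) ∧ φ a = b) :
    (l₂.filter (fun b => q b)).Perm ((l₁.filter (fun a => p a)).map φ) := by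
  apply perm_of_nodup_mem_iff (h₂.filter _) ((h₁.filter _).map hφ)
  intro b
  rw [List.mem_filter, List.mem_map]
  constructor
  · intro ⟨hb, hq⟩
    obtain ⟨a, ⟨ha, hpa⟩, hab⟩ := (hmem b).1 ⟨hb, by simpa using hq⟩
    exact ⟨a, List.mem_filter.2 ⟨ha, by simpa using hpa⟩, hab⟩
  · intro ⟨a, ha, hab⟩
    rw [List.mem_filter] at ha
    have := (hmem b).2 ⟨a, ⟨ha.1, by simpa using ha.2⟩, hab⟩
    exact ⟨this.1, by simpa using this.2⟩

end ListHelpers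

lemma vertexFn_ext {m n : ℕ} (Φ : ℤ → Fn m) (G : WGraph n) (l : Labelling m G)
    (f : Fin n → Fn m) {i : Fin n} {v : Fin G.nV} (hv : G.ext i = v) (x : Cm m) :
    vertexFn Φ G l f v x
      = dzList (inLabels G l v) (dzbarList (outLabels G l v) (f i)) x := by
  have h : ∃ j, G.ext j = v := ⟨i, hv⟩
  have hc : h.choose = i := G.ext.injective (h.choose_spec.trans hv.symm)
  simp only [vertexFn, dif_pos h, hc]

lemma vertexFn_int {m n : ℕ} (Φ : ℤ → Fn m) (G : WGraph n) (l : Labelling m G)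
    (f : Fin n → Fn m) {v : Fin G.nV} (hv : ∀ i, G.ext i ≠ v) (x : Cm m) :
    vertexFn Φ G l f v x
      = -(dzList (inLabels G l v) (dzbarList (outLabels G l v) (Φ (G.wt v))) x) := by
  have h : ¬ ∃ j, G.ext j = v := by rintro ⟨j, hj⟩; exact hv j hj
  simp only [vertexFn, dif_neg h]

lemma fin2_cases (i : Fin 2) : i = 0 ∨ i = 1 := by
  rcases i with ⟨iv, hi⟩
  interval_cases iv
  · left; rfl
  · right; rfl

end Aux

/-! ### Statement 15 -/

/-- Write `Ψ^r_w = ∂Φ_w/∂z^r`.  For every graph `G` in the domain of the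
budding map (with parameter `l ≥ -1`; for `l ≥ 0` this means `G ∈ 𝒜₂(k-l)` and for
`l = -1` it means `G ∈ 𝒜₂^{>1}(k+1)`) and all indices `r, s`, the partition functions
satisfy `Γ_{B(G)}(Ψ^r_{-1}, z^s) = −Γ_G(Ψ^r_l, z^s)` on `U`. -/
theorem statement15 {m : ℕ} (hm : 0 < m) (U : Set (Cm m)) (hU : IsOpen U)
    (hUcontr : ContractibleSpace U) (Φ : ℤ → Fn m) (hΦ : PotentialOK Φ U)
    (k : ℕ) (l : ℤ) (G G' : WGraph 2) (hdom : BudDom k l G) (hbud : Budded l G G')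
    (r s : Fin m) :
    Set.EqOn (Gam Φ G' ![dz r (Φ (-1)), fun x => x s])
      (fun x => -(Gam Φ G ![dz r (Φ l), fun x => x s] x)) U := by
  obtain ⟨σ, τ, h1, h2, h3, h4, h5, h6, h7, h8⟩ := hbud
  intro x hx
  set f' : Fin 2 → Fn m := ![dz r (Φ (-1)), fun x => x s] with hf'def
  set f : Fin 2 → Fn m := ![dz r (Φ l), fun x => x s] with hfdef
  have hl1 : (-1 : ℤ) ≤ l := by rcases hdom with ⟨h, _, _⟩ | ⟨h, _, _⟩ <;> omega
  have hΦs := hΦ.1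
  have hΦl : ContDiffOn ℝ (⊤ : ℕ∞) (Φ l) U := hΦs l hl1
  have hΦm1 : ContDiffOn ℝ (⊤ : ℕ∞) (Φ (-1)) U := hΦs (-1) le_rfl
  have hzs : ContDiffOn ℝ (⊤ : ℕ∞) (fun y : Cm m => y s) U := by
    have : (fun y : Cm m => y s)
        = ⇑(ContinuousLinearMap.proj (R := ℝ) (φ := fun _ : Fin m => ℂ) s) := rfl
    rw [this]
    exact (ContinuousLinearMap.contDiff _).contDiffOn
  have hσi := σ.symm.injective
  have hτi := τ.symm.injective
  have hext01 : G.ext 0 ≠ G.ext 1 := fun h => absurd (G.ext.injective h) (by decide)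
  have hcase : ∀ e' : Fin G'.nE,
      (∃ e, e' = τ.symm (Sum.inl e)) ∨ e' = τ.symm (Sum.inr ()) := by
    intro e'
    rcases h : τ e' with e | u
    · exact Or.inl ⟨e, by rw [← h, Equiv.symm_apply_apply]⟩
    · cases u; exact Or.inr (by rw [← h, Equiv.symm_apply_apply])
  -- in/out label comparison lemmas
  have houtPerm : ∀ (l' : Labelling m G') (v : Fin G.nV),
      (outLabels G' l' (σ.symm (Sum.inl v))).Perm
        (outLabels G (fun e => l' (τ.symm (Sum.inl e))) v) := by
    intro l' v
    unfold outLabels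
    have hperm : ((List.finRange G'.nE).filter
          (fun e' => G'.tail e' = σ.symm (Sum.inl v))).Perm
        (((List.finRange G.nE).filter (fun e => G.tail e = v)).map
          (fun e => τ.symm (Sum.inl e))) := by
      apply perm_filter_map (List.nodup_finRange _) (List.nodup_finRange _)
        (fun e₁ e₂ h => by simpa using hτi h)
      intro e'
      constructor
      · rintro ⟨-, hq⟩
        rcases hcase e' with ⟨e, rfl⟩ | rfl
        · refine ⟨e, ⟨List.mem_finRange e, ?_⟩, rfl⟩
          rw [h2] at hq
          simpa using hσi hq
        · rw [h3] at hq
          exact absurd (hσi hq) (by simp)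
      · rintro ⟨e, ⟨-, hp⟩, rfl⟩
        exact ⟨List.mem_finRange _, by rw [h2, hp]⟩
    have := hperm.map (fun e' => (l' e').1)
    rw [List.map_map] at this
    exact this
  have hinPerm : ∀ (l' : Labelling m G') (v : Fin G.nV), v ≠ G.ext 0 →
      (inLabels G' l' (σ.symm (Sum.inl v))).Perm
        (inLabels G (fun e => l' (τ.symm (Sum.inl e))) v) := by
    intro l' v hv
    unfold inLabels
    have hperm : ((List.finRange G'.nE).filter
          (fun e' => G'.head e' = σ.symm (Sum.inl v))).Perm
        (((List.finRange G.nE).filter (fun e => G.head e = v)).map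
          (fun e => τ.symm (Sum.inl e))) := by
      apply perm_filter_map (List.nodup_finRange _) (List.nodup_finRange _)
        (fun e₁ e₂ h => by simpa using hτi h)
      intro e'
      constructor
      · rintro ⟨-, hq⟩
        rcases hcase e' with ⟨e, rfl⟩ | rfl
        · refine ⟨e, ⟨List.mem_finRange e, ?_⟩, rfl⟩
          rw [h1] at hq
          simpa using hσi hq
        · rw [h4] at hq
          exact absurd (Sum.inl.inj (hσi hq)) (fun h => hv h.symm)
      · rintro ⟨e, ⟨-, hp⟩, rfl⟩
        exact ⟨List.mem_finRange _, by rw [h1, hp]⟩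
    have := hperm.map (fun e' => (l' e').2)
    rw [List.map_map] at this
    exact this
  have hinConv : ∀ (l' : Labelling m G'),
      inLabels G' l' (σ.symm (Sum.inl (G.ext 0))) = [(l' (τ.symm (Sum.inr ()))).2] := by
    intro l'
    unfold inLabels
    rw [filter_eq_singleton (List.nodup_finRange _) (List.mem_finRange (τ.symm (Sum.inr ())))
      (p := fun e' => G'.head e' = σ.symm (Sum.inl (G.ext 0))) ?_]
    · rfl
    · intro e' _
      rcases hcase e' with ⟨e, rfl⟩ | rfl
      · have hL : ¬ G'.head (τ.symm (Sum.inl e)) = σ.symm (Sum.inl (G.ext 0)) := by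
          rw [h1]
          intro h
          exact G.first_source e 0 (by simpa using hσi h) (by decide)
        have hR : ¬ τ.symm (Sum.inl e) = τ.symm (Sum.inr ()) := fun h => by simpa using hτi h
        simp [hL, hR]
      · simp [h4]
  have hinNew : ∀ (l' : Labelling m G'), inLabels G' l' (σ.symm (Sum.inr ())) = [] := by
    intro l'
    unfold inLabels
    rw [filter_eq_nil_of ?_]
    · rfl
    · intro e' _
      rcases hcase e' with ⟨e, rfl⟩ | rfl
      · intro h; simp only [h1] at h; simpa using hσi h
      · intro h; simp only [h4] at h; simpa using hσi h
  have houtNew : ∀ (l' : Labelling m G'),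
      outLabels G' l' (σ.symm (Sum.inr ())) = [(l' (τ.symm (Sum.inr ()))).1] := by
    intro l'
    unfold outLabels
    rw [filter_eq_singleton (List.nodup_finRange _) (List.mem_finRange (τ.symm (Sum.inr ())))
      (p := fun e' => G'.tail e' = σ.symm (Sum.inr ())) ?_]
    · rfl
    · intro e' _
      rcases hcase e' with ⟨e, rfl⟩ | rfl
      · have hL : ¬ G'.tail (τ.symm (Sum.inl e)) = σ.symm (Sum.inr ()) := by
          rw [h2]
          intro h
          simpa using hσi h
        have hR : ¬ τ.symm (Sum.inl e) = τ.symm (Sum.inr ()) := fun h => by simpa using hτi h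
        simp [hL, hR]
      · simp [h3]
  have hinG0 : ∀ (lG : Labelling m G), inLabels G lG (G.ext 0) = [] := by
    intro lG
    unfold inLabels
    rw [filter_eq_nil_of ?_]
    · rfl
    · intro e _ h
      exact G.first_source e 0 h (by decide)
  -- the labelling equivalence
  let E : Labelling m G' ≃ Labelling m G × (Fin m × Fin m) :=
    { toFun := fun l' => (fun e => l' (τ.symm (Sum.inl e)), l' (τ.symm (Sum.inr ()))),
      invFun := fun p e' => Sum.elim p.1 (fun _ => p.2) (τ e'),
      left_inv := fun l' => by
        funext e'
        rcases hcase e' with ⟨e, rfl⟩ | rfl <;> simp,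
      right_inv := fun p => by
        refine Prod.ext ?_ ?_
        · funext e; simp
        · simp }
  -- matrix facts
  have hdet : IsUnit (gMat Φ x).det := (Matrix.isUnit_iff_isUnit_det _).1 (hΦ.2 x hx)
  have hmulinv : gMat Φ x * (gMat Φ x)⁻¹ = 1 := Matrix.mul_nonsing_inv _ hdet
  have hsum : ∀ c : Fin m, (∑ a, gMat Φ x r a * gInv Φ a c x) = if r = c then 1 else 0 := by
    intro c
    have : (∑ a, gMat Φ x r a * gInv Φ a c x) = (gMat Φ x * (gMat Φ x)⁻¹) r c := by
      rw [Matrix.mul_apply]; rfl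
    rw [this, hmulinv, Matrix.one_apply]
  -- main per-labelling computation
  have main : ∀ (lG : Labelling m G) (a b : Fin m),
      Lam Φ G' (E.symm (lG, (a, b))) f' x
        = (gMat Φ x r a * gInv Φ a b x) *
          (-(dz b (dzbarList (outLabels G lG (G.ext 0)) (Φ l)) x)
            * (∏ v ∈ Finset.univ.erase (G.ext 0), vertexFn Φ G lG f v x)
            * ∏ e, gInv Φ (lG e).1 (lG e).2 x) := by
    intro lG a b
    set l' := E.symm (lG, (a, b)) with hl'
    have hp : E l' = (lG, (a, b)) := E.apply_symm_apply _
    have h₁ : (fun e => l' (τ.symm (Sum.inl e))) = lG := congrArg Prod.fst hp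
    have h₂ : l' (τ.symm (Sum.inr ())) = (a, b) := congrArg Prod.snd hp
    -- new external vertex
    have hnew : vertexFn Φ G' l' f' (σ.symm (Sum.inr ())) x = gMat Φ x r a := by
      rw [vertexFn_ext Φ G' l' f' h5 x, hinNew l', houtNew l', h₂]
      rfl
    -- converted vertex
    have hG'int0 : ∀ i : Fin 2, G'.ext i ≠ σ.symm (Sum.inl (G.ext 0)) := by
      intro i
      rcases fin2_cases i with rfl | rfl
      · rw [h5]; intro h; simpa using hσi h
      · rw [h6]; intro h; exact hext01 (Sum.inl.inj (hσi h)).symm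
    have hconv : vertexFn Φ G' l' f' (σ.symm (Sum.inl (G.ext 0))) x
        = -(dz b (dzbarList (outLabels G lG (G.ext 0)) (Φ l)) x) := by
      rw [vertexFn_int Φ G' l' f' hG'int0 x, hinConv l', h₂, h8]
      have hpo : (outLabels G' l' (σ.symm (Sum.inl (G.ext 0)))).Perm
          (outLabels G lG (G.ext 0)) := by
        have := houtPerm l' (G.ext 0); rwa [h₁] at this
      have : dzList [(a, b).2] (dzbarList (outLabels G' l' (σ.symm (Sum.inl (G.ext 0)))) (Φ l)) x
          = dz b (dzbarList (outLabels G lG (G.ext 0)) (Φ l)) x := by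
        rw [dzList_cons, dzList_nil]
        exact eqOn_dz hU (dzbarList_perm hU hΦl hpo) b hx
      rw [this]
    -- remaining vertices
    have hrest : ∀ v : Fin G.nV, v ≠ G.ext 0 →
        vertexFn Φ G' l' f' (σ.symm (Sum.inl v)) x = vertexFn Φ G lG f v x := by
      intro v hv
      have hpo : (outLabels G' l' (σ.symm (Sum.inl v))).Perm (outLabels G lG v) := by
        have := houtPerm l' v; rwa [h₁] at this
      have hpi : (inLabels G' l' (σ.symm (Sum.inl v))).Perm (inLabels G lG v) := by
        have := hinPerm l' v hv; rwa [h₁] at this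
      by_cases hv1 : v = G.ext 1
      · subst hv1
        rw [vertexFn_ext Φ G' l' f' h6 x, vertexFn_ext Φ G lG f (rfl : G.ext 1 = G.ext 1) x]
        have hf1 : f' 1 = fun y : Cm m => y s := by simp [hf'def]
        have hf1' : f 1 = fun y : Cm m => y s := by simp [hfdef]
        rw [hf1, hf1']
        have step1 := eqOn_dzList hU (dzbarList_perm hU hzs hpo)
          (inLabels G' l' (σ.symm (Sum.inl (G.ext 1)))) hx
        have step2 := dzList_perm hU (contDiffOn_dzbarList hU hzs (outLabels G lG (G.ext 1)))
          hpi hx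
        exact step1.trans step2
      · have hGint : ∀ i : Fin 2, G.ext i ≠ v := by
          intro i
          rcases fin2_cases i with rfl | rfl
          · exact fun h => hv h.symm
          · exact fun h => hv1 h.symm
        have hG'int : ∀ i : Fin 2, G'.ext i ≠ σ.symm (Sum.inl v) := by
          intro i
          rcases fin2_cases i with rfl | rfl
          · rw [h5]; intro h; simpa using hσi h
          · rw [h6]; intro h; exact hv1 (Sum.inl.inj (hσi h)).symm
        rw [vertexFn_int Φ G' l' f' hG'int x, vertexFn_int Φ G lG f hGint x,
          h7 v hv, neg_inj]
        have hΦw : ContDiffOn ℝ (⊤ : ℕ∞) (Φ (G.wt v)) U := hΦs _ (G.wt_ge v hGint)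
        have step1 := eqOn_dzList hU (dzbarList_perm hU hΦw hpo)
          (inLabels G' l' (σ.symm (Sum.inl v))) hx
        have step2 := dzList_perm hU (contDiffOn_dzbarList hU hΦw (outLabels G lG v)) hpi hx
        exact step1.trans step2
    -- products
    have hVprod : (∏ v', vertexFn Φ G' l' f' v' x)
        = (∏ v : Fin G.nV, vertexFn Φ G' l' f' (σ.symm (Sum.inl v)) x)
          * vertexFn Φ G' l' f' (σ.symm (Sum.inr ())) x := by
      rw [← Equiv.prod_comp σ.symm (fun v' => vertexFn Φ G' l' f' v' x),
        Fintype.prod_sum_type]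
      simp
    have hEprod : (∏ e', gInv Φ (l' e').1 (l' e').2 x)
        = (∏ e, gInv Φ (lG e).1 (lG e).2 x) * gInv Φ a b x := by
      rw [← Equiv.prod_comp τ.symm (fun e' => gInv Φ (l' e').1 (l' e').2 x),
        Fintype.prod_sum_type]
      congr 1
      · exact Finset.prod_congr rfl (fun e _ => by rw [congrFun h₁ e])
      · simp [h₂]
    show (∏ v', vertexFn Φ G' l' f' v' x) * ∏ e', gInv Φ (l' e').1 (l' e').2 x = _
    rw [hVprod, hEprod,
      ← Finset.mul_prod_erase Finset.univ
        (fun v => vertexFn Φ G' l' f' (σ.symm (Sum.inl v)) x) (Finset.mem_univ (G.ext 0)),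
      hconv, hnew,
      Finset.prod_congr rfl (fun v hv => hrest v (Finset.ne_of_mem_erase hv))]
    ring
  -- summing over the two extra labels
  have sumab : ∀ lG : Labelling m G,
      (∑ ab : Fin m × Fin m, Lam Φ G' (E.symm (lG, ab)) f' x) = -(Lam Φ G lG f x) := by
    intro lG
    set P0 := ∏ v ∈ Finset.univ.erase (G.ext 0), vertexFn Φ G lG f v x with hP0
    set Q := ∏ e, gInv Φ (lG e).1 (lG e).2 x with hQ
    have hK : ∀ c : Fin m, -(dz c (dzbarList (outLabels G lG (G.ext 0)) (Φ l)) x) * P0 * Q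
        = -(dz c (dzbarList (outLabels G lG (G.ext 0)) (Φ l)) x) * P0 * Q := fun _ => rfl
    rw [Fintype.sum_prod_type]
    have step1 : ∀ a : Fin m, (∑ b, Lam Φ G' (E.symm (lG, (a, b))) f' x)
        = ∑ b, (gMat Φ x r a * gInv Φ a b x) *
            (-(dz b (dzbarList (outLabels G lG (G.ext 0)) (Φ l)) x) * P0 * Q) :=
      fun a => Finset.sum_congr rfl (fun b _ => main lG a b)
    calc (∑ a, ∑ b, Lam Φ G' (E.symm (lG, (a, b))) f' x)
        = ∑ a, ∑ b, (gMat Φ x r a * gInv Φ a b x) *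
            (-(dz b (dzbarList (outLabels G lG (G.ext 0)) (Φ l)) x) * P0 * Q) :=
          Finset.sum_congr rfl (fun a _ => step1 a)
      _ = ∑ b, ∑ a, (gMat Φ x r a * gInv Φ a b x) *
            (-(dz b (dzbarList (outLabels G lG (G.ext 0)) (Φ l)) x) * P0 * Q) :=
          Finset.sum_comm
      _ = ∑ b, (∑ a, gMat Φ x r a * gInv Φ a b x) *
            (-(dz b (dzbarList (outLabels G lG (G.ext 0)) (Φ l)) x) * P0 * Q) := by
          refine Finset.sum_congr rfl (fun b _ => ?_)
          rw [Finset.sum_mul]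
      _ = ∑ b, (if r = b then (1:ℂ) else 0) *
            (-(dz b (dzbarList (outLabels G lG (G.ext 0)) (Φ l)) x) * P0 * Q) :=
          Finset.sum_congr rfl (fun b _ => by rw [hsum b])
      _ = -(dz r (dzbarList (outLabels G lG (G.ext 0)) (Φ l)) x) * P0 * Q := by
          simp only [ite_mul, one_mul, zero_mul, Finset.sum_ite_eq, Finset.mem_univ, if_true]
      _ = -(Lam Φ G lG f x) := by
          have hvx : dz r (dzbarList (outLabels G lG (G.ext 0)) (Φ l)) x
              = vertexFn Φ G lG f (G.ext 0) x := by
            rw [vertexFn_ext Φ G lG f (rfl : G.ext 0 = G.ext 0) x, hinG0 lG, dzList_nil]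
            have hf0 : f 0 = dz r (Φ l) := by simp [hfdef]
            rw [hf0]
            exact dz_dzbarList hU hΦl r (outLabels G lG (G.ext 0)) hx
          have hLam : Lam Φ G lG f x = vertexFn Φ G lG f (G.ext 0) x * P0 * Q := by
            show (∏ v, vertexFn Φ G lG f v x) * Q = _
            rw [← Finset.mul_prod_erase Finset.univ (fun v => vertexFn Φ G lG f v x)
              (Finset.mem_univ (G.ext 0))]
          rw [hvx, hLam]
          ring
  -- assemble
  show Gam Φ G' f' x = -(Gam Φ G f x)
  calc Gam Φ G' f' x = ∑ l' : Labelling m G', Lam Φ G' l' f' x := rfl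
    _ = ∑ p : Labelling m G × (Fin m × Fin m), Lam Φ G' (E.symm p) f' x :=
        (Equiv.sum_comp E.symm (fun l' => Lam Φ G' l' f' x)).symm
    _ = ∑ lG : Labelling m G, ∑ ab : Fin m × Fin m, Lam Φ G' (E.symm (lG, ab)) f' x := by
        rw [Fintype.sum_prod_type]
    _ = ∑ lG : Labelling m G, -(Lam Φ G lG f x) :=
        Finset.sum_congr rfl (fun lG _ => sumab lG)
    _ = -(Gam Φ G f x) := by
        rw [Finset.sum_neg_distrib]
        rfl
end

section
/- For all integers n ≥ 2 and k ≥ 0, the set A_n(k) of isomorphism classes of weighted acyclic graphs with n external vertices and total weight k is finite. In particular, each operator D_k(f_1, …, f_n) = Σ_{G ∈ A_n(k)} Γ_G(f_1, …, f_n)/|Aut(G)| is a finite sum. -/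
open Finset

namespace WGraph
variable {n : ℕ}

lemma wt_ge_all (G : WGraph n) (v : Fin G.nV) : -1 ≤ G.wt v := by
  by_cases h : ∃ i, G.ext i = v
  · obtain ⟨i, rfl⟩ := h; rw [G.wt_ext]; norm_num
  · push_neg at h; exact G.wt_ge v h

lemma sum_inDeg (G : WGraph n) : ∑ v, G.inDeg v = G.nE := by
  have := Finset.card_eq_sum_card_fiberwise
    (f := G.head) (s := univ) (t := univ) (fun x _ => mem_univ _)
  simpa [inDeg, card_univ] using this.symm

lemma sum_outDeg (G : WGraph n) : ∑ v, G.outDeg v = G.nE := by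
  have := Finset.card_eq_sum_card_fiberwise
    (f := G.tail) (s := univ) (t := univ) (fun x _ => mem_univ _)
  simpa [outDeg, card_univ] using this.symm

open Classical in
lemma three_mul_card_le (G : WGraph n) :
    3 * (univ.filter fun v => (∀ i, G.ext i ≠ v) ∧ G.wt v = -1).card ≤ 2 * G.nE := by
  classical
  set M := univ.filter fun v => (∀ i, G.ext i ≠ v) ∧ G.wt v = -1 with hM
  have h1 : ∑ _v ∈ M, 3 ≤ ∑ v ∈ M, (G.inDeg v + G.outDeg v) := by
    refine Finset.sum_le_sum fun v hv => ?_
    rw [hM, mem_filter] at hv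
    exact G.wt_neg_deg v hv.2.1 hv.2.2
  have h2 : ∑ v ∈ M, (G.inDeg v + G.outDeg v) ≤ ∑ v, (G.inDeg v + G.outDeg v) :=
    Finset.sum_le_sum_of_subset (filter_subset _ _)
  have h3 : ∑ v, (G.inDeg v + G.outDeg v) = 2 * G.nE := by
    rw [Finset.sum_add_distrib, sum_inDeg, sum_outDeg]; ring
  calc 3 * M.card = ∑ _v ∈ M, 3 := by rw [Finset.sum_const, smul_eq_mul, mul_comm]
    _ ≤ 2 * G.nE := h3 ▸ le_trans h1 h2

open Classical in
lemma neg_card_le_sum_wt (G : WGraph n) :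
    -(((univ.filter fun v => (∀ i, G.ext i ≠ v) ∧ G.wt v = -1).card : ℤ)) ≤ ∑ v, G.wt v := by
  classical
  have : ∑ v, (if (∀ i, G.ext i ≠ v) ∧ G.wt v = -1 then (-1 : ℤ) else 0) ≤ ∑ v, G.wt v := by
    refine Finset.sum_le_sum fun v _ => ?_
    by_cases h : (∀ i, G.ext i ≠ v) ∧ G.wt v = -1
    · simp [h]
    · simp only [h, if_false]
      by_cases hext : ∃ i, G.ext i = v
      · obtain ⟨i, rfl⟩ := hext; rw [G.wt_ext]
      · push_neg at hext
        have h1 := G.wt_ge v hext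
        have h2 : G.wt v ≠ -1 := fun hw => h (⟨hext, hw⟩)
        omega
  calc -(((univ.filter fun v => (∀ i, G.ext i ≠ v) ∧ G.wt v = -1).card : ℤ))
      = ∑ v, (if (∀ i, G.ext i ≠ v) ∧ G.wt v = -1 then (-1 : ℤ) else 0) := by
        rw [← Finset.sum_filter]; simp [mul_comm]
    _ ≤ ∑ v, G.wt v := this

lemma nE_le (G : WGraph n) {k : ℕ} (hW : G.W = (k : ℤ)) : G.nE ≤ 3 * k := by
  classical
  have h1 := G.three_mul_card_le
  have h2 := G.neg_card_le_sum_wt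
  have h3 : (G.nE : ℤ) + ∑ v, G.wt v = (k : ℤ) := hW
  omega

lemma nV_le (G : WGraph n) : G.nV ≤ n + G.nE := by
  classical
  have hsplit : (univ : Finset (Fin G.nV)).card =
      (univ.filter fun v => ∃ i, G.ext i = v).card +
      (univ.filter fun v => ¬ ∃ i, G.ext i = v).card :=
    (Finset.card_filter_add_card_filter_not _).symm
  have hext : (univ.filter fun v => ∃ i, G.ext i = v).card ≤ n := by
    have : (univ.filter fun v => ∃ i, G.ext i = v) ⊆ univ.image G.ext := by
      intro v hv
      rw [mem_filter] at hv
      obtain ⟨i, hi⟩ := hv.2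
      exact mem_image.mpr ⟨i, mem_univ _, hi⟩
    calc (univ.filter fun v => ∃ i, G.ext i = v).card ≤ (univ.image G.ext).card :=
          Finset.card_le_card this
      _ ≤ (univ : Finset (Fin n)).card := Finset.card_image_le
      _ = n := by simp
  have hint : (univ.filter fun v => ¬ ∃ i, G.ext i = v).card ≤ G.nE := by
    by_cases hne : (univ.filter fun v => ¬ ∃ i, G.ext i = v).Nonempty
    · obtain ⟨v0, hv0⟩ := hne
      rw [mem_filter] at hv0
      have hv0' : ∀ i, G.ext i ≠ v0 := by push_neg at hv0; exact hv0.2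
      obtain ⟨e0, _⟩ := G.internal_in v0 hv0'
      have : ∀ v : Fin G.nV, ∃ e : Fin G.nE,
          ((∀ i, G.ext i ≠ v) → G.head e = v) := by
        intro v
        by_cases h : ∀ i, G.ext i ≠ v
        · obtain ⟨e, he⟩ := G.internal_in v h
          exact ⟨e, fun _ => he⟩
        · exact ⟨e0, fun h' => absurd h' h⟩
      choose f hf using this
      have hinj : Set.InjOn f (univ.filter fun v => ¬ ∃ i, G.ext i = v) := ?_
      · have := Finset.card_le_card_of_injOn f (fun v _ => mem_univ _) hinj
        simpa using this
      intro a ha b hb hab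
      rw [mem_coe, mem_filter] at ha hb
      have ha' : ∀ i, G.ext i ≠ a := by
        have := ha.2; push_neg at this; exact this
      have hb' : ∀ i, G.ext i ≠ b := by
        have := hb.2; push_neg at this; exact this
      rw [← hf a ha', ← hf b hb', hab]
    · rw [Finset.not_nonempty_iff_eq_empty] at hne
      rw [hne]
      simp
  calc G.nV = (univ : Finset (Fin G.nV)).card := by simp
    _ ≤ n + G.nE := by omega

lemma wt_le (G : WGraph n) {k : ℕ} (hW : G.W = (k : ℤ)) (v : Fin G.nV) :
    G.wt v + 1 ≤ (k : ℤ) + G.nV := by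
  classical
  have hsum : (G.nE : ℤ) + ∑ u, G.wt u = (k : ℤ) := hW
  have herase : ∑ u ∈ univ.erase v, G.wt u + G.wt v = ∑ u, G.wt u :=
    Finset.sum_erase_add _ _ (mem_univ v)
  have hlow : -(((univ.erase v).card : ℤ)) ≤ ∑ u ∈ univ.erase v, G.wt u := by
    have := Finset.card_nsmul_le_sum (univ.erase v) G.wt (-1)
      (fun u _ => G.wt_ge_all u)
    simpa using this
  have hcard : (univ.erase v).card + 1 = G.nV := by
    rw [Finset.card_erase_of_mem (mem_univ v)]
    have : 0 < G.nV := v.pos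
    simp only [card_univ, Fintype.card_fin]
    omega
  omega

end WGraph

namespace WGraph
variable {n : ℕ}

/-- Encoding of a weighted graph of total weight `k` by bounded data. -/
noncomputable def encode (k : ℕ) (G : {G : WGraph n // G.W = (k : ℤ)}) :
    Fin (n + 3 * k + 1) × Fin (3 * k + 1) × (Fin (3 * k) → Fin (n + 3 * k)) ×
      (Fin (3 * k) → Fin (n + 3 * k)) × (Fin n → Fin (n + 3 * k)) ×
      (Fin (n + 3 * k) → Fin (4 * k + n + 1)) :=
  have hnE : G.1.nE ≤ 3 * k := G.1.nE_le G.2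
  have hnV : G.1.nV ≤ n + 3 * k := le_trans G.1.nV_le (by omega)
  ⟨⟨G.1.nV, by omega⟩, ⟨G.1.nE, by omega⟩,
   fun i => if h : (i : ℕ) < G.1.nE then
      ⟨G.1.head ⟨i, h⟩, by have := (G.1.head ⟨i, h⟩).2; omega⟩
    else ⟨(i : ℕ), by have := i.2; omega⟩,
   fun i => if h : (i : ℕ) < G.1.nE then
      ⟨G.1.tail ⟨i, h⟩, by have := (G.1.tail ⟨i, h⟩).2; omega⟩
    else ⟨(i : ℕ), by have := i.2; omega⟩,
   fun j => ⟨G.1.ext j, by have := (G.1.ext j).2; omega⟩,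
   fun v => if h : (v : ℕ) < G.1.nV then
      ⟨(G.1.wt ⟨v, h⟩ + 1).toNat, by
        have h1 := G.1.wt_le G.2 ⟨v, h⟩
        have h2 := G.1.wt_ge_all ⟨v, h⟩
        omega⟩
    else ⟨0, by omega⟩⟩

lemma eq_of_fields {G G' : WGraph n} (hV : G.nV = G'.nV) (hE : G.nE = G'.nE)
    (hh : ∀ (e : ℕ) (he : e < G.nE) (he' : e < G'.nE),
      (G.head ⟨e, he⟩ : ℕ) = (G'.head ⟨e, he'⟩ : ℕ))
    (ht : ∀ (e : ℕ) (he : e < G.nE) (he' : e < G'.nE),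
      (G.tail ⟨e, he⟩ : ℕ) = (G'.tail ⟨e, he'⟩ : ℕ))
    (hx : ∀ i, (G.ext i : ℕ) = (G'.ext i : ℕ))
    (hw : ∀ (v : ℕ) (hv : v < G.nV) (hv' : v < G'.nV), G.wt ⟨v, hv⟩ = G'.wt ⟨v, hv'⟩) :
    G = G' := by
  cases G with
  | mk nV nE head tail ext wt ac we wg ii io wnd fs ls =>
  cases G' with
  | mk nV' nE' head' tail' ext' wt' ac' we' wg' ii' io' wnd' fs' ls' =>
  dsimp at hV hE hh ht hx hw
  subst hV; subst hE
  have h1 : head = head' := funext fun e => Fin.ext (hh e e.2 e.2)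
  have h2 : tail = tail' := funext fun e => Fin.ext (ht e e.2 e.2)
  have h3 : ext = ext' := Function.Embedding.ext fun i => Fin.ext (hx i)
  have h4 : wt = wt' := funext fun v => hw v v.2 v.2
  subst h1; subst h2; subst h3; subst h4
  rfl

lemma encode_injective (k : ℕ) :
    Function.Injective (encode (n := n) k) := by
  rintro ⟨G, hG⟩ ⟨G', hG'⟩ h
  apply Subtype.ext
  show G = G'
  have hnE : G.nE ≤ 3 * k := G.nE_le hG
  have hnE' : G'.nE ≤ 3 * k := G'.nE_le hG'
  simp only [encode, Prod.mk.injEq] at h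
  obtain ⟨h1, h2, h3, h4, h5, h6⟩ := h
  have e1 : G.nV = G'.nV := congrArg Fin.val h1
  have e2 : G.nE = G'.nE := congrArg Fin.val h2
  refine eq_of_fields e1 e2 ?_ ?_ ?_ ?_
  · intro e he he'
    have hlt : e < 3 * k := lt_of_lt_of_le he hnE
    have := congrFun h3 ⟨e, hlt⟩
    rw [dif_pos he, dif_pos he'] at this
    exact congrArg Fin.val this
  · intro e he he'
    have hlt : e < 3 * k := lt_of_lt_of_le he hnE
    have := congrFun h4 ⟨e, hlt⟩
    rw [dif_pos he, dif_pos he'] at this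
    exact congrArg Fin.val this
  · intro i
    exact congrArg Fin.val (congrFun h5 i)
  · intro v hv hv'
    have hnV : G.nV ≤ n + 3 * k := le_trans G.nV_le (by omega)
    have hlt : v < n + 3 * k := lt_of_lt_of_le hv hnV
    have := congrFun h6 ⟨v, hlt⟩
    rw [dif_pos hv, dif_pos hv'] at this
    have hval : (G.wt ⟨v, hv⟩ + 1).toNat = (G'.wt ⟨v, hv'⟩ + 1).toNat :=
      congrArg Fin.val this
    have w1 := G.wt_ge_all ⟨v, hv⟩
    have w2 := G'.wt_ge_all ⟨v, hv'⟩
    omega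

end WGraph

/-! ### Statement 18 -/

/-- For all `n ≥ 2` and `k ≥ 0`, the set `𝒜_n(k)` of isomorphism
classes of weighted acyclic graphs with `n` external vertices and total weight `k` is
finite: there is a finite set of graphs meeting every isomorphism class of total weight
`k`.  In particular (with graphs presented concretely on the vertex and edge sets
`Fin nV`, `Fin nE`) there are only finitely many graphs of total weight `k` altogether,
so each operator `D_k(f₁, …, f_n) = Σ_{G ∈ 𝒜_n(k)} Γ_G(f₁, …, f_n)/|Aut(G)|` is a finite
sum. -/
theorem statement18 (n : ℕ) (hn : 2 ≤ n) (k : ℕ) :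
    (∃ S : Finset (WGraph n), ∀ G : WGraph n, G.W = (k : ℤ) → ∃ G' ∈ S, G.Iso G') ∧
    {G : WGraph n | G.W = (k : ℤ)}.Finite := by
  have hfin : {G : WGraph n | G.W = (k : ℤ)}.Finite := by
    have : Finite {G : WGraph n // G.W = (k : ℤ)} :=
      Finite.of_injective _ (WGraph.encode_injective (n := n) k)
    exact Set.finite_coe_iff.mp this
  refine ⟨⟨hfin.toFinset, fun G hG => ⟨G, hfin.mem_toFinset.mpr hG,
    Equiv.refl _, Equiv.refl _, fun _ => rfl, fun _ => rfl, fun _ => rfl, fun _ => rfl⟩⟩, hfin⟩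
end
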